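/- Let μ_a < μ_b be small dominant weights of an irreducible reduced root system R, and let β be a positive root with ⟨μ_a, β⟩ = 0 and ⟨μ_b, β∨⟩ = 2. Then the orbit (W_{μ_a} ∩ W_{μ_b})(β) equals the set of positive roots α with ⟨μ_a, α⟩ = 0, ⟨μ_b, α∨⟩ = 2, and ⟨α, α⟩ = ⟨β, β⟩. -/

import Mathlib

open RealInnerProductSpace

noncomputable section

variable {E : Type*} [NormedAddCommGroup E] [InnerProductSpace ℝ E] [FiniteDimensional ℝ E]

/-- The coroot `α∨ = 2α/⟨α,α⟩` of a vector `α`. -/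
def coroot (α : E) : E := (2 / ⟪α, α⟫) • α

/-- The orthogonal reflection across the hyperplane perpendicular to `α`. -/
def reflAt (α : E) : E ≃ₗᵢ[ℝ] E := Submodule.reflection (ℝ ∙ α)ᗮ

/-- An irreducible reduced crystallographic root system with a choice of positive roots. -/
structure IsRootSystem (R Rpos : Finset E) : Prop where
  pos_subset : Rpos ⊆ R
  ne_zero : ∀ α ∈ R, α ≠ 0
  span_top : Submodule.span ℝ (R : Set E) = ⊤
  reduced : ∀ α ∈ R, ∀ c : ℝ, c • α ∈ (R : Set E) → c = 1 ∨ c = -1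
  refl_mem : ∀ α ∈ R, ∀ β ∈ R, reflAt α β ∈ R
  cryst : ∀ α ∈ R, ∀ β ∈ R, ∃ k : ℤ, ⟪β, coroot α⟫ = (k : ℝ)
  pos_split : ∀ α ∈ R, Xor' (α ∈ Rpos) (-α ∈ Rpos)
  pos_closed : ∀ α ∈ Rpos, ∀ β ∈ Rpos, α + β ∈ R → α + β ∈ Rpos
  irreducible : ∀ S : Finset E, S ⊆ R → S.Nonempty → S ≠ R →
    ∃ α ∈ S, ∃ β ∈ R, β ∉ S ∧ ⟪α, β⟫ ≠ 0

/-- The Weyl group: the subgroup of linear isometries generated by the root reflections. -/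
def weylGroup (R : Finset E) : Subgroup (E ≃ₗᵢ[ℝ] E) :=
  Subgroup.closure (reflAt '' (R : Set E))

/-- A weight: an element with integral pairings against all coroots. -/
def IsWeight (R : Finset E) (x : E) : Prop := ∀ α ∈ R, ∃ k : ℤ, ⟪x, coroot α⟫ = (k : ℝ)

/-- Dominant: nonnegative pairing with all positive roots. -/
def IsDominant (Rpos : Finset E) (x : E) : Prop := ∀ α ∈ Rpos, 0 ≤ ⟪x, α⟫

/-- Dominance order: `μ ≤ λ` iff `λ - μ` is a nonnegative integer combination of positive
roots, i.e. lies in the additive submonoid generated by the positive roots. -/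
def domLE (Rpos : Finset E) (μ lam : E) : Prop :=
  lam - μ ∈ AddSubmonoid.closure (Rpos : Set E)

/-- Strict dominance order. -/
def domLT (Rpos : Finset E) (μ lam : E) : Prop := domLE Rpos μ lam ∧ μ ≠ lam

/-- A small weight: a dominant weight pairing at most `2` with every positive coroot. -/
def IsSmall (R Rpos : Finset E) (ω : E) : Prop :=
  IsDominant Rpos ω ∧ IsWeight R ω ∧ ∀ α ∈ Rpos, ⟪ω, coroot α⟫ ≤ 2

/-- A minuscule weight: a nonzero dominant weight pairing at most `1` with every positive
coroot. -/
def IsMinuscule (R Rpos : Finset E) (ω : E) : Prop :=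
  IsDominant Rpos ω ∧ IsWeight R ω ∧ ω ≠ 0 ∧ ∀ α ∈ Rpos, ⟪ω, coroot α⟫ ≤ 1

/-- The Weyl orbit of a point. -/
def weylOrbit (R : Finset E) (x : E) : Set E := {y | ∃ w ∈ weylGroup R, w x = y}

/-!
Every `w` fixing `μa` and `μb` preserves the conditions on the right, which gives one inclusion.
Conversely, let `δ`, `ζ` be two roots satisfying them, of squared length `ℓ`. The Cartan integer
`⟨ζ, δ∨⟩` lies in `[-2, 2]` and is not negative: `-2` means `ζ = -δ`, which is not positive, and
for `-1` the root `s_δ ζ = ζ + δ` would pair `4` with `μb`. If it is `2` then `ζ = δ`; if it is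
`1`, then `δ - ζ` is a root orthogonal to `μa` and `μb` whose reflection maps `δ` to `ζ`.
If `δ ⟂ ζ`, irreducibility gives a root `γ` with `⟨δ, γ⟩ > 0` and `⟨ζ, γ⟩ ≠ 0`. The bound
`|⟨μb, ξ∨⟩| ≤ 2` for `ξ = γ, s_δ γ, s_ζ γ, s_ζ s_δ γ` leaves two cases. Either `⟨μb, γ∨⟩ = 2`
and `⟨γ, γ⟩ ∈ {ℓ, 2ℓ}`, and then `γ` links `δ` to `ζ`, or `γ = δ + ζ`; or `γ ⟂ μb` and
`⟨ζ, γ⟩ < 0`, and then `s_γ δ` is a root of the same kind with `⟨s_γ δ, ζ⟩ > 0`. In both cases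
`γ ⟂ μa`, because `μa` is dominant and pairs equally with a positive and a negative root among
the four above.
-/

set_option linter.unusedSectionVars false

theorem inner_coroot (x α : E) : ⟪x, coroot α⟫ = 2 / ⟪α, α⟫ * ⟪x, α⟫ := by
  rw [coroot, real_inner_smul_right]

theorem coroot_neg (α : E) : coroot (-α) = -coroot α := by
  simp [coroot]

theorem inner_coroot_pos_iff {x α : E} (hα : α ≠ 0) : 0 < ⟪x, coroot α⟫ ↔ 0 < ⟪x, α⟫ := by
  have : 0 < 2 / ⟪α, α⟫ := div_pos two_pos (real_inner_self_pos.mpr hα)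
  rw [inner_coroot, mul_pos_iff_of_pos_left this]

theorem coroot_map (w : E ≃ₗᵢ[ℝ] E) (α : E) : coroot (w α) = w (coroot α) := by
  rw [coroot, coroot, w.inner_map_map, w.map_smul]

theorem reflAt_apply (α x : E) : reflAt α x = x - ⟪x, coroot α⟫ • α := by
  rw [reflAt, Submodule.reflection_orthogonal_apply, Submodule.reflection_singleton_apply]
  simp only [RCLike.ofReal_real_eq_id, id_eq]
  rw [← real_inner_self_eq_norm_sq, inner_coroot, real_inner_comm x α, two_smul]
  module

theorem reflAt_eq_self {α x : E} (h : ⟪x, α⟫ = 0) : reflAt α x = x := by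
  rw [reflAt_apply, inner_coroot, h, mul_zero, zero_smul, sub_zero]

theorem reflAt_self (α : E) : reflAt α α = -α :=
  Submodule.reflection_orthogonalComplement_singleton_eq_neg α

theorem reflAt_sub_self {v w : E} (h : ⟪v, v⟫ = ⟪w, w⟫) : reflAt (v - w) v = w :=
  Submodule.reflection_sub (by simpa [real_inner_self_eq_norm_sq] using h)

theorem inner_reflAt_left (α x y : E) : ⟪reflAt α x, y⟫ = ⟪x, reflAt α y⟫ := by
  conv_rhs => rw [← (reflAt α).inner_map_map x (reflAt α y)]
  rw [reflAt, Submodule.reflection_reflection]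

theorem inner_reflAt_of_inner_eq_zero {α x : E} (h : ⟪x, α⟫ = 0) (y : E) :
    ⟪x, reflAt α y⟫ = ⟪x, y⟫ := by
  rw [← inner_reflAt_left, reflAt_eq_self h]

theorem inner_coroot_reflAt (x α γ : E) :
    ⟪x, coroot (reflAt α γ)⟫ = ⟪x, coroot γ⟫ - ⟪x, coroot α⟫ * ⟪α, coroot γ⟫ := by
  rw [coroot_map, ← inner_reflAt_left, reflAt_apply, inner_sub_left, real_inner_smul_left]

theorem eq_of_inner_coroot_eq_two {δ ζ : E} (h : ⟪ζ, ζ⟫ = ⟪δ, δ⟫) (h2 : ⟪ζ, coroot δ⟫ = 2) :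
    ζ = δ := by
  rw [inner_coroot] at h2
  have hδ : ⟪δ, δ⟫ ≠ 0 := by rintro h0; rw [h0, div_zero, zero_mul] at h2; norm_num at h2
  have hζδ : ⟪ζ, δ⟫ = ⟪δ, δ⟫ := by field_simp at h2; linarith
  rw [← sub_eq_zero, ← inner_self_eq_zero (𝕜 := ℝ), inner_sub_sub_self, real_inner_comm ζ δ,
    hζδ, h]
  ring

theorem abs_inner_coroot_le_two {δ ζ : E} (h : ⟪ζ, ζ⟫ = ⟪δ, δ⟫) : |⟪ζ, coroot δ⟫| ≤ 2 := by
  rw [inner_coroot]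
  rcases eq_or_ne ⟪δ, δ⟫ 0 with h0 | h0
  · rw [h0, div_zero, zero_mul, abs_zero]; norm_num
  have hpos : 0 < ⟪δ, δ⟫ := lt_of_le_of_ne real_inner_self_nonneg h0.symm
  have hCS : |⟪ζ, δ⟫| ≤ ⟪δ, δ⟫ := by
    rw [← sq_le_sq₀ (abs_nonneg _) hpos.le, sq_abs, sq, sq]
    have := real_inner_mul_inner_self_le ζ δ
    rwa [h] at this
  rw [abs_mul, abs_of_pos (div_pos two_pos hpos), div_mul_eq_mul_div, div_le_iff₀ hpos]
  linarith

theorem inner_eq_of_inner_coroot_eq {x α : E} {c : ℝ} (hα : ⟪α, α⟫ ≠ 0)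
    (h : ⟪x, coroot α⟫ = c) : ⟪x, α⟫ = c / 2 * ⟪α, α⟫ := by
  rw [inner_coroot] at h
  field_simp at h ⊢
  linarith

theorem inner_coroot_comm {δ ζ : E} (h : ⟪ζ, ζ⟫ = ⟪δ, δ⟫) :
    ⟪δ, coroot ζ⟫ = ⟪ζ, coroot δ⟫ := by
  rw [inner_coroot, inner_coroot, h, real_inner_comm ζ δ]

namespace IsRootSystem

variable {R Rpos : Finset E} (hRS : IsRootSystem R Rpos)
include hRS

theorem inner_self_pos {γ : E} (hγ : γ ∈ R) : 0 < ⟪γ, γ⟫ :=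
  real_inner_self_pos.mpr (hRS.ne_zero γ hγ)

theorem neg_mem {γ : E} (hγ : γ ∈ R) : -γ ∈ R := by
  simpa [reflAt_self] using hRS.refl_mem γ hγ γ hγ

theorem apply_mem_of_mem_weylGroup {w : E ≃ₗᵢ[ℝ] E} (hw : w ∈ weylGroup R) {γ : E}
    (hγ : γ ∈ R) : w γ ∈ R := by
  induction hw using Subgroup.closure_induction'' generalizing γ with
  | mem _ hs => obtain ⟨α, hα, rfl⟩ := hs; exact hRS.refl_mem α hα γ hγ
  | inv_mem _ hs =>
    obtain ⟨α, hα, rfl⟩ := hs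
    rw [reflAt, Submodule.reflection_inv]
    exact hRS.refl_mem α hα γ hγ
  | one => exact hγ
  | mul _ _ _ _ hx hy => exact hx (hy hγ)

theorem mem_pos_of_inner_pos {x γ : E} (hx : IsDominant Rpos x) (hγ : γ ∈ R)
    (h : 0 < ⟪x, γ⟫) : γ ∈ Rpos := by
  refine (Xor.or (hRS.pos_split γ hγ)).resolve_right fun hneg => ?_
  have := hx _ hneg
  rw [inner_neg_right] at this
  linarith

theorem abs_inner_coroot_le_two_of_isSmall {μ γ : E} (hμ : IsSmall R Rpos μ) (hγ : γ ∈ R) :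
    |⟪μ, coroot γ⟫| ≤ 2 := by
  have hnonneg {α : E} (hα : α ∈ Rpos) : 0 ≤ ⟪μ, coroot α⟫ := by
    rw [inner_coroot]
    exact mul_nonneg (div_nonneg two_pos.le real_inner_self_nonneg) (hμ.1 α hα)
  rcases Xor.or (hRS.pos_split γ hγ) with hpos | hneg
  · exact abs_le.mpr ⟨by linarith [hnonneg hpos], hμ.2.2 γ hpos⟩
  · have h1 := hnonneg hneg
    have h2 := hμ.2.2 _ hneg
    rw [coroot_neg, inner_neg_right] at h1 h2
    exact abs_le.mpr ⟨by linarith, by linarith⟩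

theorem inner_eq_zero_of_inner_coroot_pos_of_neg {μ ν ξ ξ' : E} (hμ : IsDominant Rpos μ)
    (hν : IsDominant Rpos ν) (hξ : ξ ∈ R) (hξ' : ξ' ∈ R) (hpos : 0 < ⟪ν, coroot ξ⟫)
    (hneg : ⟪ν, coroot ξ'⟫ < 0) (heq : ⟪μ, ξ'⟫ = ⟪μ, ξ⟫) : ⟪μ, ξ⟫ = 0 := by
  have hξpos : ξ ∈ Rpos := hRS.mem_pos_of_inner_pos hν hξ
    ((inner_coroot_pos_iff (hRS.ne_zero ξ hξ)).mp hpos)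
  have hξ'neg : -ξ' ∈ Rpos := hRS.mem_pos_of_inner_pos hν (hRS.neg_mem hξ')
    ((inner_coroot_pos_iff (neg_ne_zero.mpr (hRS.ne_zero ξ' hξ'))).mp
      (by rw [coroot_neg, inner_neg_right]; linarith))
  have h1 := hμ ξ hξpos
  have h2 := hμ _ hξ'neg
  rw [inner_neg_right, heq] at h2
  linarith

/-- By irreducibility, since the roots sharing a non-orthogonal root with `x` are closed under
passing to a non-orthogonal root: if `γ` links `x` to `a`, and `b ⟂ γ`, `a ⟂ x`, then `s_γ a`
links `x` to `b`. -/
theorem exists_inner_ne_zero_inner_ne_zero {x y : E} (hx : x ∈ R) (hy : y ∈ R) :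
    ∃ γ ∈ R, ⟪γ, x⟫ ≠ 0 ∧ ⟪γ, y⟫ ≠ 0 := by
  classical
  set S := R.filter fun z => ∃ γ ∈ R, ⟪γ, x⟫ ≠ 0 ∧ ⟪γ, z⟫ ≠ 0
  have hxx : ⟪x, x⟫ ≠ 0 := (hRS.inner_self_pos hx).ne'
  suffices S = R from (Finset.mem_filter.mp (this ▸ hy : y ∈ S)).2
  by_contra hSR
  obtain ⟨a, haS, b, hb, hbS, hab⟩ := hRS.irreducible S (Finset.filter_subset _ _)
    ⟨x, Finset.mem_filter.mpr ⟨hx, x, hx, hxx, hxx⟩⟩ hSR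
  obtain ⟨ha, γ, hγ, hγx, hγa⟩ := Finset.mem_filter.mp haS
  refine hbS (Finset.mem_filter.mpr ⟨hb, ?_⟩)
  rcases ne_or_eq ⟪γ, b⟫ 0 with hγb | hγb
  · exact ⟨γ, hγ, hγx, hγb⟩
  rcases ne_or_eq ⟪a, x⟫ 0 with hax | hax
  · exact ⟨a, ha, hax, hab⟩
  refine ⟨reflAt γ a, hRS.refl_mem γ hγ a ha, ?_, ?_⟩
  · rw [reflAt_apply, inner_sub_left, hax, real_inner_smul_left, inner_coroot, zero_sub,
      neg_ne_zero]
    have hγγ := hRS.inner_self_pos hγ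
    have hγa' : ⟪a, γ⟫ ≠ 0 := by rwa [real_inner_comm]
    positivity
  · rw [inner_reflAt_left, reflAt_eq_self (by rwa [real_inner_comm])]
    exact hab

end IsRootSystem

theorem reflAt_mem_weylGroup {R : Finset E} {γ : E} (hγ : γ ∈ R) : reflAt γ ∈ weylGroup R :=
  Subgroup.subset_closure ⟨γ, hγ, rfl⟩

def InStabOrbit (R : Finset E) (μa μb δ ζ : E) : Prop :=
  ∃ w ∈ weylGroup R, w μa = μa ∧ w μb = μb ∧ w δ = ζ

namespace InStabOrbit

variable {R : Finset E} {μa μb δ ζ ξ : E}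

theorem refl (δ : E) : InStabOrbit R μa μb δ δ :=
  ⟨1, one_mem _, rfl, rfl, rfl⟩

theorem trans (h : InStabOrbit R μa μb δ ζ) (h' : InStabOrbit R μa μb ζ ξ) :
    InStabOrbit R μa μb δ ξ := by
  obtain ⟨w, hw, ha, hb, rfl⟩ := h
  obtain ⟨w', hw', ha', hb', rfl⟩ := h'
  exact ⟨w' * w, mul_mem hw' hw, by simp [ha, ha'], by simp [hb, hb'], rfl⟩

theorem of_reflAt {γ : E} (hγ : γ ∈ R) (ha : ⟪μa, γ⟫ = 0) (hb : ⟪μb, γ⟫ = 0) (δ : E) :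
    InStabOrbit R μa μb δ (reflAt γ δ) :=
  ⟨reflAt γ, reflAt_mem_weylGroup hγ, reflAt_eq_self ha, reflAt_eq_self hb, rfl⟩

end InStabOrbit

structure IsTwoRoot (Rpos : Finset E) (μa μb : E) (ℓ : ℝ) (δ : E) : Prop where
  mem : δ ∈ Rpos
  inner_left : ⟪μa, δ⟫ = 0
  inner_coroot_right : ⟪μb, coroot δ⟫ = 2
  inner_self : ⟪δ, δ⟫ = ℓ

namespace IsTwoRoot

variable {R Rpos : Finset E} {μa μb δ ζ : E} {ℓ : ℝ}

theorem inner_self_ne_zero (h : IsTwoRoot Rpos μa μb ℓ δ) : ⟪δ, δ⟫ ≠ 0 := by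
  intro h0
  have := h.inner_coroot_right
  rw [inner_coroot, h0, div_zero, zero_mul] at this
  norm_num at this

theorem pos (h : IsTwoRoot Rpos μa μb ℓ δ) : 0 < ℓ :=
  h.inner_self ▸ lt_of_le_of_ne real_inner_self_nonneg h.inner_self_ne_zero.symm

theorem inner_right (h : IsTwoRoot Rpos μa μb ℓ δ) : ⟪μb, δ⟫ = ℓ := by
  rw [inner_eq_of_inner_coroot_eq h.inner_self_ne_zero h.inner_coroot_right, h.inner_self]
  ring

theorem mem_R (hRS : IsRootSystem R Rpos) (h : IsTwoRoot Rpos μa μb ℓ δ) : δ ∈ R :=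
  hRS.pos_subset h.mem

theorem map (hRS : IsRootSystem R Rpos) (hμb : IsDominant Rpos μb)
    (h : IsTwoRoot Rpos μa μb ℓ δ) (hδζ : InStabOrbit R μa μb δ ζ) : IsTwoRoot Rpos μa μb ℓ ζ := by
  obtain ⟨w, hw, ha, hb, rfl⟩ := hδζ
  refine ⟨hRS.mem_pos_of_inner_pos hμb (hRS.apply_mem_of_mem_weylGroup hw (h.mem_R hRS)) ?_,
    ?_, ?_, ?_⟩
  · rw [← hb, w.inner_map_map, h.inner_right]
    exact h.pos
  · rw [← ha, w.inner_map_map, h.inner_left]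
  · rw [coroot_map, ← hb, w.inner_map_map, h.inner_coroot_right]
  · rw [w.inner_map_map, h.inner_self]

theorem exists_inner_coroot_eq_int (hRS : IsRootSystem R Rpos) (hδ : IsTwoRoot Rpos μa μb ℓ δ)
    (hζ : IsTwoRoot Rpos μa μb ℓ ζ) : ∃ k : ℤ, ⟪ζ, coroot δ⟫ = k ∧ -2 ≤ k ∧ k ≤ 2 := by
  obtain ⟨k, hk⟩ := hRS.cryst δ (hδ.mem_R hRS) ζ (hζ.mem_R hRS)
  have hbound := abs_inner_coroot_le_two (hζ.inner_self.trans hδ.inner_self.symm)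
  rw [hk, abs_le] at hbound
  exact ⟨k, hk, by exact_mod_cast hbound.1, by exact_mod_cast hbound.2⟩

theorem inStabOrbit_of_sub_mem (hδ : IsTwoRoot Rpos μa μb ℓ δ) (hζ : IsTwoRoot Rpos μa μb ℓ ζ)
    (h : δ - ζ ∈ R) : InStabOrbit R μa μb δ ζ := by
  have := InStabOrbit.of_reflAt h (by rw [inner_sub_right, hδ.inner_left, hζ.inner_left, sub_zero])
    (by rw [inner_sub_right, hδ.inner_right, hζ.inner_right, sub_self]) δ
  rwa [reflAt_sub_self (hδ.inner_self.trans hζ.inner_self.symm)] at this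

theorem inStabOrbit_of_inner_pos (hRS : IsRootSystem R Rpos) (hδ : IsTwoRoot Rpos μa μb ℓ δ)
    (hζ : IsTwoRoot Rpos μa μb ℓ ζ) (h : 0 < ⟪ζ, δ⟫) : InStabOrbit R μa μb δ ζ := by
  obtain ⟨k, hk, -, hk2⟩ := hδ.exists_inner_coroot_eq_int hRS hζ
  have hk0 : 0 < k := by
    have := (inner_coroot_pos_iff (hRS.ne_zero δ (hδ.mem_R hRS))).mpr h
    rw [hk] at this
    exact_mod_cast this
  obtain rfl | rfl : k = 1 ∨ k = 2 := by omega
  · have hsub : ζ - δ ∈ R := by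
      have := hRS.refl_mem δ (hδ.mem_R hRS) ζ (hζ.mem_R hRS)
      rwa [reflAt_apply, hk, Int.cast_one, one_smul] at this
    exact hδ.inStabOrbit_of_sub_mem hζ (by simpa using hRS.neg_mem hsub)
  · rw [eq_of_inner_coroot_eq_two (hζ.inner_self.trans hδ.inner_self.symm) (by rw [hk]; norm_num)]
    exact InStabOrbit.refl δ

theorem inner_nonneg (hRS : IsRootSystem R Rpos) (hμb : IsSmall R Rpos μb)
    (hδ : IsTwoRoot Rpos μa μb ℓ δ) (hζ : IsTwoRoot Rpos μa μb ℓ ζ) : 0 ≤ ⟪ζ, δ⟫ := by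
  obtain ⟨k, hk, hk2, -⟩ := hδ.exists_inner_coroot_eq_int hRS hζ
  have hζδ := inner_eq_of_inner_coroot_eq hδ.inner_self_ne_zero hk
  rw [hζδ, hδ.inner_self]
  suffices 0 ≤ k by have := hδ.pos; positivity
  by_contra! hneg
  obtain rfl | rfl : k = -2 ∨ k = -1 := by omega
  · have : -ζ = δ := eq_of_inner_coroot_eq_two (by rw [inner_neg_neg, hζ.inner_self,
      hδ.inner_self]) (by rw [inner_neg_left, hk]; norm_num)
    rw [← this] at hδ
    exact ((xor_iff_or_and_not_and _ _).mp (hRS.pos_split ζ (hζ.mem_R hRS))).2 ⟨hζ.mem, hδ.mem⟩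
  · have := hRS.abs_inner_coroot_le_two_of_isSmall hμb (hRS.refl_mem δ (hδ.mem_R hRS) ζ (hζ.mem_R hRS))
    rw [inner_coroot_reflAt, hζ.inner_coroot_right, hδ.inner_coroot_right,
      inner_coroot_comm (hζ.inner_self.trans hδ.inner_self.symm), hk] at this
    norm_num at this

end IsTwoRoot

namespace IsTwoRoot

variable {R Rpos : Finset E} {μa μb δ ζ γ : E} {ℓ : ℝ}

theorem inStabOrbit_of_inner_pos_of_inner_neg (hRS : IsRootSystem R Rpos) (hμb : IsDominant Rpos μb)
    (hδ : IsTwoRoot Rpos μa μb ℓ δ) (hζ : IsTwoRoot Rpos μa μb ℓ ζ) (horth : ⟪ζ, δ⟫ = 0)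
    (hγ : γ ∈ R) (hγa : ⟪μa, γ⟫ = 0) (hγb : ⟪μb, γ⟫ = 0) (hδγ : 0 < ⟪δ, γ⟫)
    (hζγ : ⟪ζ, γ⟫ < 0) : InStabOrbit R μa μb δ ζ := by
  have hδη := InStabOrbit.of_reflAt hγ hγa hγb δ
  have hη := hδ.map hRS hμb hδη
  refine hδη.trans (hη.inStabOrbit_of_inner_pos hRS hζ ?_)
  have : 0 < ⟪δ, coroot γ⟫ := (inner_coroot_pos_iff (hRS.ne_zero γ hγ)).mpr hδγ
  rw [reflAt_apply, inner_sub_right, horth, real_inner_smul_right]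
  nlinarith

theorem inStabOrbit_of_inner_coroot_eq_one (hRS : IsRootSystem R Rpos) (hμb : IsSmall R Rpos μb)
    (hδ : IsTwoRoot Rpos μa μb ℓ δ) (hζ : IsTwoRoot Rpos μa μb ℓ ζ) (horth : ⟪ζ, δ⟫ = 0)
    (hγ : γ ∈ R) (hγa : ⟪μa, γ⟫ = 0) (hγb : ⟪μb, coroot γ⟫ = 2) (hδγ : ⟪δ, coroot γ⟫ = 1)
    (hζγ : ⟪ζ, coroot γ⟫ = 1) : InStabOrbit R μa μb δ ζ := by
  have hγγ := hRS.inner_self_pos hγ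
  -- `k = ⟪γ, γ⟫ / ℓ`, and `k ≤ 2` because `μb` pairs to `2 - 2k` with the coroot of `s_γ δ`
  obtain ⟨k, hk⟩ := hRS.cryst δ (hδ.mem_R hRS) γ hγ
  have hδγ' := inner_eq_of_inner_coroot_eq hγγ.ne' hδγ
  have hζγ' := inner_eq_of_inner_coroot_eq hγγ.ne' hζγ
  have hγδ' := inner_eq_of_inner_coroot_eq hδ.inner_self_ne_zero hk
  rw [real_inner_comm, hδγ', hδ.inner_self] at hγδ'
  have hk0 : 0 < k := by
    have : (0 : ℝ) < k := by nlinarith [hδ.pos]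
    exact_mod_cast this
  have hk2 : k ≤ 2 := by
    have := hRS.abs_inner_coroot_le_two_of_isSmall hμb (hRS.refl_mem γ hγ δ (hδ.mem_R hRS))
    rw [inner_coroot_reflAt, hδ.inner_coroot_right, hγb, hk, abs_le] at this
    have : (k : ℝ) ≤ 2 := by linarith
    exact_mod_cast this
  obtain rfl | rfl : k = 1 ∨ k = 2 := by omega
  · have hγT : IsTwoRoot Rpos μa μb ℓ γ :=
      ⟨hRS.mem_pos_of_inner_pos hμb.1 hγ ((inner_coroot_pos_iff (hRS.ne_zero γ hγ)).mp
        (by rw [hγb]; norm_num)), hγa, hγb, by push_cast at hγδ'; linarith⟩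
    exact (hδ.inStabOrbit_of_inner_pos hRS hγT (by rw [real_inner_comm]; linarith)).trans
      (hγT.inStabOrbit_of_inner_pos hRS hζ (by linarith))
  · have hsum : γ = δ + ζ := by
      rw [← sub_eq_zero, ← inner_self_eq_zero (𝕜 := ℝ)]
      simp only [inner_sub_left, inner_sub_right, inner_add_left, inner_add_right]
      rw [real_inner_comm δ γ, real_inner_comm ζ γ, real_inner_comm ζ δ, horth, hδγ', hζγ',
        hδ.inner_self, hζ.inner_self]
      push_cast at hγδ'
      linarith
    have hrefl := hRS.refl_mem δ (hδ.mem_R hRS) γ hγ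
    rw [reflAt_apply, hk, hsum] at hrefl
    exact hδ.inStabOrbit_of_sub_mem hζ (by convert hRS.neg_mem hrefl using 1; push_cast; module)

theorem inStabOrbit_of_inner_eq_zero (hRS : IsRootSystem R Rpos) (hμa : IsDominant Rpos μa)
    (hμb : IsSmall R Rpos μb) (hδ : IsTwoRoot Rpos μa μb ℓ δ) (hζ : IsTwoRoot Rpos μa μb ℓ ζ)
    (horth : ⟪ζ, δ⟫ = 0) (hγ : γ ∈ R) (hδγ : 0 < ⟪δ, γ⟫) (hζγ : ⟪ζ, γ⟫ ≠ 0) :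
    InStabOrbit R μa μb δ ζ := by
  have hδR := hδ.mem_R hRS
  have hζR := hζ.mem_R hRS
  have hγγ := hRS.inner_self_pos hγ
  obtain ⟨a, ha⟩ := hRS.cryst γ hγ δ hδR
  obtain ⟨b, hb⟩ := hRS.cryst γ hγ ζ hζR
  obtain ⟨q, hq⟩ := hμb.2.1 γ hγ
  have hζδ : ⟪ζ, coroot δ⟫ = 0 := by rw [inner_coroot, horth, mul_zero]
  have hδγ_refl : ⟪μb, coroot (reflAt δ γ)⟫ = q - 2 * a := by
    rw [inner_coroot_reflAt, hq, hδ.inner_coroot_right, ha]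
  have hζγ_refl : ⟪μb, coroot (reflAt ζ γ)⟫ = q - 2 * b := by
    rw [inner_coroot_reflAt, hq, hζ.inner_coroot_right, hb]
  have hζδγ_refl : ⟪μb, coroot (reflAt ζ (reflAt δ γ))⟫ = q - 2 * a - 2 * b := by
    rw [inner_coroot_reflAt, hδγ_refl, hζ.inner_coroot_right, inner_coroot_reflAt, hζδ, hb]
    ring
  have bound {ξ : E} (hξ : ξ ∈ R) {k : ℤ} (hk : ⟪μb, coroot ξ⟫ = k) : |k| ≤ 2 := by
    have := hRS.abs_inner_coroot_le_two_of_isSmall hμb hξ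
    rw [hk] at this
    exact_mod_cast this
  have hγ₁ := hRS.refl_mem δ hδR γ hγ
  have hγ₂ := hRS.refl_mem ζ hζR γ hγ
  have hγ₃ := hRS.refl_mem ζ hζR _ hγ₁
  have h₀ := bound hγ hq
  have h₁ := bound hγ₁ (k := q - 2 * a) (by rw [hδγ_refl]; push_cast; ring)
  have h₂ := bound hγ₂ (k := q - 2 * b) (by rw [hζγ_refl]; push_cast; ring)
  have h₃ := bound hγ₃ (k := q - 2 * a - 2 * b) (by rw [hζδγ_refl]; push_cast; ring)
  have ha0 : 0 < a := by
    have := (inner_coroot_pos_iff (hRS.ne_zero γ hγ)).mpr hδγ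
    rw [ha] at this
    exact_mod_cast this
  have hb0 : b ≠ 0 := by
    rintro rfl
    exact hζγ (by simpa using inner_eq_of_inner_coroot_eq hγγ.ne' hb)
  have hμaδ : ⟪μa, δ⟫ = 0 := hδ.inner_left
  have hμaζ : ⟪μa, ζ⟫ = 0 := hζ.inner_left
  obtain ⟨rfl, ⟨rfl, rfl⟩ | ⟨rfl, rfl⟩⟩ : a = 1 ∧ (b = 1 ∧ q = 2 ∨ b = -1 ∧ q = 0) := by
    rw [abs_le] at h₀ h₁ h₂ h₃
    omega
  · refine hδ.inStabOrbit_of_inner_coroot_eq_one hRS hμb hζ horth hγ ?_ (by rw [hq]; norm_num)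
      (by rw [ha]; norm_num) (by rw [hb]; norm_num)
    refine hRS.inner_eq_zero_of_inner_coroot_pos_of_neg hμa hμb.1 hγ hγ₃
      (by rw [hq]; norm_num) (by rw [hζδγ_refl]; norm_num) ?_
    rw [inner_reflAt_of_inner_eq_zero hμaζ, inner_reflAt_of_inner_eq_zero hμaδ]
  · have hγa : ⟪μa, γ⟫ = 0 := by
      have := hRS.inner_eq_zero_of_inner_coroot_pos_of_neg hμa hμb.1 hγ₂ hγ₁
        (by rw [hζγ_refl]; norm_num) (by rw [hδγ_refl]; norm_num)
        (by rw [inner_reflAt_of_inner_eq_zero hμaζ, inner_reflAt_of_inner_eq_zero hμaδ])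
      rwa [inner_reflAt_of_inner_eq_zero hμaζ] at this
    refine hδ.inStabOrbit_of_inner_pos_of_inner_neg hRS hμb.1 hζ horth hγ hγa ?_ hδγ ?_
    · simpa using inner_eq_of_inner_coroot_eq hγγ.ne' hq
    · rw [inner_eq_of_inner_coroot_eq hγγ.ne' hb]
      push_cast
      linarith

theorem inStabOrbit (hRS : IsRootSystem R Rpos) (hμa : IsDominant Rpos μa) (hμb : IsSmall R Rpos μb)
    (hδ : IsTwoRoot Rpos μa μb ℓ δ) (hζ : IsTwoRoot Rpos μa μb ℓ ζ) :
    InStabOrbit R μa μb δ ζ := by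
  rcases (hδ.inner_nonneg hRS hμb hζ).lt_or_eq with hpos | horth
  · exact hδ.inStabOrbit_of_inner_pos hRS hζ hpos
  obtain ⟨γ, hγ, hγδ, hγζ⟩ := hRS.exists_inner_ne_zero_inner_ne_zero (hδ.mem_R hRS) (hζ.mem_R hRS)
  rw [real_inner_comm] at hγδ hγζ
  rcases hγδ.lt_or_gt with hneg | hpos
  · exact hδ.inStabOrbit_of_inner_eq_zero hRS hμa hμb hζ horth.symm (hRS.neg_mem hγ)
      (by rw [inner_neg_right]; linarith) (by rwa [inner_neg_right, neg_ne_zero])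
  · exact hδ.inStabOrbit_of_inner_eq_zero hRS hμa hμb hζ horth.symm hγ hpos hγζ

end IsTwoRoot

theorem orbit_eq_roots_of_same_length_general (R Rpos : Finset E) (hRS : IsRootSystem R Rpos)
    (μa μb : E) (ha : IsSmall R Rpos μa) (hb : IsSmall R Rpos μb)
    (β : E) (hβ : β ∈ Rpos) (hβa : ⟪μa, β⟫ = 0) (hβb : ⟪μb, coroot β⟫ = 2) :
    {y : E | ∃ w ∈ weylGroup R, w μa = μa ∧ w μb = μb ∧ w β = y}
      = {α : E | α ∈ Rpos ∧ ⟪μa, α⟫ = 0 ∧ ⟪μb, coroot α⟫ = 2 ∧ ⟪α, α⟫ = ⟪β, β⟫} := by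
  have hβT : IsTwoRoot Rpos μa μb ⟪β, β⟫ β := ⟨hβ, hβa, hβb, rfl⟩
  ext y
  constructor
  · intro hy
    obtain ⟨hmem, hya, hyb, hyy⟩ := hβT.map hRS hb.1 hy
    exact ⟨hmem, hya, hyb, hyy⟩
  · rintro ⟨hmem, hya, hyb, hyy⟩
    exact hβT.inStabOrbit hRS ha.1 hb ⟨hmem, hya, hyb, hyy⟩

/-- the `(W_{μ_a} ∩ W_{μ_b})`-orbit of `β` equals the set of positive roots `α`
orthogonal to `μ_a` with `⟨μ_b, α∨⟩ = 2` of the same length as `β`. -/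
theorem orbit_eq_roots_of_same_length (R Rpos : Finset E) (hRS : IsRootSystem R Rpos)
    (μa μb : E) (ha : IsSmall R Rpos μa) (hb : IsSmall R Rpos μb)
    (hab : domLT Rpos μa μb)
    (β : E) (hβ : β ∈ Rpos) (hβa : ⟪μa, β⟫ = 0) (hβb : ⟪μb, coroot β⟫ = 2) :
    {y : E | ∃ w ∈ weylGroup R, w μa = μa ∧ w μb = μb ∧ w β = y}
      = {α : E | α ∈ Rpos ∧ ⟪μa, α⟫ = 0 ∧ ⟪μb, coroot α⟫ = 2 ∧ ⟪α, α⟫ = ⟪β, β⟫} :=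
  orbit_eq_roots_of_same_length_general R Rpos hRS μa μb ha hb β hβ hβa hβb
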